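/- arXiv:1502.07290 — 3 statements merged into one kernel-verified Lean document; each statement's English description precedes it below -/
import Mathlib

section
/- For every t with a < t ≤ b, the nonnegative normalized minimizer is unique: if u₁ and u₂ both lie in H¹₀((a,t)), satisfy ∫_a^t uᵢ(x)² dx = 1, uᵢ ≥ 0 on (a,t), and ∫_a^t ((uᵢ'(x))² + V(x) uᵢ(x)²) dx = λ(t) for i = 1,2, then u₁ = u₂ almost everywhere on (a,t). -/
open MeasureTheory Set

/-- Membership in the Sobolev space `H¹₀((a,t))`: `u` is continuous on `[a,t]`,
has derivative `u'` on `(a,t)` with `u'` square-integrable, and vanishes at both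
endpoints. -/
def MemH10 (a t : ℝ) (u u' : ℝ → ℝ) : Prop :=
  ContinuousOn u (Set.Icc a t) ∧
  (∀ x ∈ Set.Ioo a t, HasDerivAt u (u' x) x) ∧
  IntervalIntegrable (fun x => (u' x) ^ 2) volume a t ∧
  u a = 0 ∧ u t = 0

/-- The ground state energy
`λ(t) = inf { ∫_a^t ((u')² + V u²) : u ∈ H¹₀((a,t)), ∫_a^t u² = 1 }`. -/
noncomputable def groundStateEnergy (a : ℝ) (V : ℝ → ℝ) (t : ℝ) : ℝ :=
  sInf { E : ℝ | ∃ u u' : ℝ → ℝ, MemH10 a t u u' ∧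
    (∫ x in a..t, (u x) ^ 2) = 1 ∧
    E = ∫ x in a..t, ((u' x) ^ 2 + V x * (u x) ^ 2) }

/-! A normalized minimizer `u` satisfies the weak Euler–Lagrange equation
`∫ (u' v' + (V - λ) u v) = 0` for all `v ∈ H¹₀`. Testing it against primitives of
mean-zero continuous functions and applying the du Bois-Reymond lemma shows that `u'` agrees
with a `C¹` function `D` with `D' = (V - λ) u`, so `u` classically solves `u'' = (V - λ) u`.
Two such solutions vanishing at `a` have vanishing Wronskian, hence `u₁ - k u₂` has zero Cauchy
data at a point `x₀` where `u₂ x₀ ≠ 0`, for `k = u₁ x₀ / u₂ x₀`, and vanishes by uniqueness for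
the ODE. Normalization gives `k² = 1` and nonnegativity `k = 1`. -/

open scoped ContDiff

namespace MemH10

variable {a t : ℝ} {u u' v v' : ℝ → ℝ}

lemma aestronglyMeasurable_deriv (hu : MemH10 a t u u') :
    AEStronglyMeasurable u' (volume.restrict (Ioo a t)) :=
  (measurable_deriv u).aestronglyMeasurable.congr <|
    (ae_restrict_iff' measurableSet_Ioo).2 <| .of_forall fun x hx => (hu.2.1 x hx).deriv

lemma memLp_deriv (hu : MemH10 a t u u') (hat : a ≤ t) :
    MemLp u' 2 (volume.restrict (Ioo a t)) :=
  (memLp_two_iff_integrable_sq hu.aestronglyMeasurable_deriv).2 <|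
    (intervalIntegrable_iff_integrableOn_Ioo_of_le hat).1 hu.2.2.1

lemma intervalIntegrable_deriv (hu : MemH10 a t u u') (hat : a ≤ t) :
    IntervalIntegrable u' volume a t :=
  (intervalIntegrable_iff_integrableOn_Ioo_of_le hat).2 <|
    (hu.memLp_deriv hat).integrable one_le_two

lemma intervalIntegrable_deriv_mul (hu : MemH10 a t u u') (hv : MemH10 a t v v') (hat : a ≤ t) :
    IntervalIntegrable (fun x => u' x * v' x) volume a t :=
  (intervalIntegrable_iff_integrableOn_Ioo_of_le hat).2 <|
    (hu.memLp_deriv hat).integrable_mul (hv.memLp_deriv hat)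

lemma add (hu : MemH10 a t u u') (hv : MemH10 a t v v') (hat : a ≤ t) :
    MemH10 a t (fun x => u x + v x) (fun x => u' x + v' x) := by
  refine ⟨hu.1.add hv.1, fun x hx => (hu.2.1 x hx).add (hv.2.1 x hx), ?_, by
    simp [hu.2.2.2.1, hv.2.2.2.1], by simp [hu.2.2.2.2, hv.2.2.2.2]⟩
  have h := (hu.2.2.1.add ((hu.intervalIntegrable_deriv_mul hv hat).const_mul 2)).add hv.2.2.1
  exact h.congr fun x _ => by ring

lemma const_mul (hu : MemH10 a t u u') (c : ℝ) :
    MemH10 a t (fun x => c * u x) (fun x => c * u' x) := by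
  refine ⟨continuousOn_const.mul hu.1, fun x hx => (hu.2.1 x hx).const_mul c, ?_, by
    simp [hu.2.2.2.1], by simp [hu.2.2.2.2]⟩
  simpa only [mul_pow] using hu.2.2.1.const_mul (c ^ 2)

end MemH10

noncomputable def energy (a t : ℝ) (V u u' : ℝ → ℝ) : ℝ :=
  ∫ x in a..t, ((u' x) ^ 2 + V x * (u x) ^ 2)

section Energy

variable {a t m : ℝ} {V u u' v v' : ℝ → ℝ}

lemma MemH10.intervalIntegrable_energy (hu : MemH10 a t u u') (hat : a ≤ t)
    (hV : ContinuousOn V (Icc a t)) :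
    IntervalIntegrable (fun x => (u' x) ^ 2 + V x * (u x) ^ 2) volume a t :=
  hu.2.2.1.add ((hV.mul (hu.1.pow 2)).intervalIntegrable_of_Icc hat)

lemma energy_add_const_mul (hat : a ≤ t) (hV : ContinuousOn V (Icc a t))
    (hu : MemH10 a t u u') (hv : MemH10 a t v v') (ε : ℝ) :
    energy a t V (fun x => u x + ε * v x) (fun x => u' x + ε * v' x) =
      energy a t V u u' + 2 * ε * (∫ x in a..t, (u' x * v' x + V x * (u x * v x))) +
        ε ^ 2 * energy a t V v v' := by
  have hB : IntervalIntegrable (fun x => u' x * v' x + V x * (u x * v x)) volume a t :=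
    (hu.intervalIntegrable_deriv_mul hv hat).add
      ((hV.mul (hu.1.mul hv.1)).intervalIntegrable_of_Icc hat)
  unfold energy
  rw [← intervalIntegral.integral_const_mul, ← intervalIntegral.integral_const_mul,
    ← intervalIntegral.integral_add (hu.intervalIntegrable_energy hat hV) (hB.const_mul _),
    ← intervalIntegral.integral_add ((hu.intervalIntegrable_energy hat hV).add (hB.const_mul _))
      ((hv.intervalIntegrable_energy hat hV).const_mul _)]
  exact intervalIntegral.integral_congr fun x _ => by ring

lemma energy_const_mul (V : ℝ → ℝ) (c : ℝ) :
    energy a t V (fun x => c * u x) (fun x => c * u' x) = c ^ 2 * energy a t V u u' := by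
  rw [energy, energy, ← intervalIntegral.integral_const_mul]
  exact intervalIntegral.integral_congr fun x _ => by ring

lemma energy_sub_const (hat : a ≤ t) (hV : ContinuousOn V (Icc a t)) (hu : MemH10 a t u u')
    (c : ℝ) :
    energy a t (fun x => V x - c) u u' = energy a t V u u' - c * ∫ x in a..t, (u x) ^ 2 := by
  have hsq : IntervalIntegrable (fun x => (u x) ^ 2) volume a t :=
    (hu.1.pow 2).intervalIntegrable_of_Icc hat
  rw [energy, energy, ← intervalIntegral.integral_const_mul,
    ← intervalIntegral.integral_sub (hu.intervalIntegrable_energy hat hV) (hsq.const_mul c)]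
  exact intervalIntegral.integral_congr fun x _ => by ring

lemma mul_integral_sq_le_energy (hat : a ≤ t) (hV : ContinuousOn V (Icc a t))
    (hm : ∀ x ∈ Icc a t, m ≤ V x) (hu : MemH10 a t u u') :
    m * ∫ x in a..t, (u x) ^ 2 ≤ energy a t V u u' := by
  have hnonneg : 0 ≤ energy a t (fun x => V x - m) u u' :=
    intervalIntegral.integral_nonneg hat fun x hx =>
      add_nonneg (sq_nonneg _) (mul_nonneg (sub_nonneg.2 (hm x hx)) (sq_nonneg _))
  linarith [energy_sub_const hat hV hu m]

lemma bddBelow_energies (hat : a ≤ t) (hV : ContinuousOn V (Icc a t)) :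
    BddBelow { E : ℝ | ∃ u u' : ℝ → ℝ, MemH10 a t u u' ∧
      (∫ x in a..t, (u x) ^ 2) = 1 ∧ E = ∫ x in a..t, ((u' x) ^ 2 + V x * (u x) ^ 2) } := by
  obtain ⟨m, hm⟩ := isCompact_Icc.bddBelow_image hV
  refine ⟨m, ?_⟩
  rintro _ ⟨w, w', hw, hn, rfl⟩
  have := mul_integral_sq_le_energy hat hV (fun x hx => hm (mem_image_of_mem V hx)) hw
  rwa [hn, mul_one] at this

lemma groundStateEnergy_mul_le_energy (hat : a ≤ t) (hV : ContinuousOn V (Icc a t))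
    (hu : MemH10 a t u u') :
    groundStateEnergy a V t * ∫ x in a..t, (u x) ^ 2 ≤ energy a t V u u' := by
  rcases (intervalIntegral.integral_nonneg hat fun x _ => sq_nonneg (u x)).eq_or_lt with hN | hN
  · obtain ⟨m, hm⟩ := isCompact_Icc.bddBelow_image hV
    have := mul_integral_sq_le_energy hat hV (fun x hx => hm (mem_image_of_mem V hx)) hu
    rwa [← hN, mul_zero] at this ⊢
  · set N := ∫ x in a..t, (u x) ^ 2
    set c := (√N)⁻¹
    have hcN : c ^ 2 * N = 1 := by
      rw [inv_pow, Real.sq_sqrt hN.le, inv_mul_cancel₀ hN.ne']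
    have hle : groundStateEnergy a V t ≤ c ^ 2 * energy a t V u u' := by
      refine csInf_le (bddBelow_energies hat hV)
        ⟨_, _, hu.const_mul c, ?_, (energy_const_mul V c).symm⟩
      simpa only [mul_pow, intervalIntegral.integral_const_mul] using hcN
    calc groundStateEnergy a V t * N ≤ c ^ 2 * energy a t V u u' * N :=
          mul_le_mul_of_nonneg_right hle hN.le
      _ = energy a t V u u' := by rw [mul_right_comm, hcN, one_mul]

lemma energy_sub_groundStateEnergy_nonneg (hat : a ≤ t) (hV : ContinuousOn V (Icc a t))
    (hu : MemH10 a t u u') :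
    0 ≤ energy a t (fun x => V x - groundStateEnergy a V t) u u' := by
  rw [energy_sub_const hat hV hu]
  linarith [groundStateEnergy_mul_le_energy hat hV hu]

end Energy

def IsGroundState (a t : ℝ) (V u u' : ℝ → ℝ) : Prop :=
  MemH10 a t u u' ∧ (∫ x in a..t, (u x) ^ 2) = 1 ∧ energy a t V u u' = groundStateEnergy a V t

lemma eq_zero_of_forall_nonneg_two_mul_add_sq_mul {b c : ℝ}
    (h : ∀ ε : ℝ, 0 ≤ 2 * ε * b + ε ^ 2 * c) : b = 0 := by
  have := discrim_le_zero (a := c) (b := 2 * b) (c := 0) fun ε => by linarith [h ε]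
  rw [discrim] at this
  nlinarith [sq_nonneg b]

/-- The weak Euler–Lagrange equation `-u'' + (V - λ) u = 0` of a ground state. -/
theorem IsGroundState.integral_deriv_mul_add_eq_zero {a t : ℝ} {V u u' v v' : ℝ → ℝ}
    (hat : a ≤ t) (hV : ContinuousOn V (Icc a t)) (hu : IsGroundState a t V u u')
    (hv : MemH10 a t v v') :
    ∫ x in a..t, (u' x * v' x + (V x - groundStateEnergy a V t) * (u x * v x)) = 0 := by
  obtain ⟨hu, hn, hmin⟩ := hu
  have hW : ContinuousOn (fun x => V x - groundStateEnergy a V t) (Icc a t) :=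
    hV.sub continuousOn_const
  have hu0 : energy a t (fun x => V x - groundStateEnergy a V t) u u' = 0 := by
    rw [energy_sub_const hat hV hu, hn, hmin, mul_one, sub_self]
  refine eq_zero_of_forall_nonneg_two_mul_add_sq_mul
    (c := energy a t (fun x => V x - groundStateEnergy a V t) v v') fun ε => ?_
  have := energy_sub_groundStateEnergy_nonneg hat hV (hu.add (hv.const_mul ε) hat)
  rwa [energy_add_const_mul hat hW hu hv, hu0, zero_add] at this

section WeakDerivative

variable {a b : ℝ}

/-- The du Bois-Reymond lemma. -/
theorem ae_eq_const_of_integral_mul_eq_zero {f : ℝ → ℝ} (hab : a < b)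
    (hf : IntervalIntegrable f volume a b)
    (h : ∀ θ : ℝ → ℝ, Continuous θ → ∫ x in a..b, θ x = 0 → ∫ x in a..b, f x * θ x = 0) :
    ∃ c, ∀ᵐ x ∂volume.restrict (Ioo a b), f x = c := by
  -- `c` is the mean of `f`; testing `h` with `ψ` minus its mean shows `∫ ψ (f - c) = 0`.
  set c := (b - a)⁻¹ * ∫ x in a..b, f x
  have hloc : LocallyIntegrableOn (fun x => f x - c) (Ioo a b) :=
    (((intervalIntegrable_iff_integrableOn_Ioo_of_le hab.le).1 hf).sub
      (integrableOn_const measure_Ioo_lt_top.ne)).locallyIntegrableOn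
  suffices horth : ∀ ψ : ℝ → ℝ, ContDiff ℝ ∞ ψ → HasCompactSupport ψ →
      tsupport ψ ⊆ Ioo a b → ∫ x, ψ x • (f x - c) = 0 by
    refine ⟨c, (ae_restrict_iff' measurableSet_Ioo).2 ?_⟩
    filter_upwards [isOpen_Ioo.ae_eq_zero_of_integral_contDiff_smul_eq_zero hloc horth]
      with x hx hxU
    exact sub_eq_zero.1 (hx hxU)
  intro ψ hψ _ hψU
  have hψc := hψ.continuous
  have hfψ : IntervalIntegrable (fun x => f x * ψ x) volume a b :=
    hf.mul_continuousOn hψc.continuousOn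
  rw [← setIntegral_eq_integral_of_forall_compl_eq_zero fun x hx => by
      rw [image_eq_zero_of_notMem_tsupport fun h => hx (hψU h), zero_smul],
    ← integral_Ioc_eq_integral_Ioo, ← intervalIntegral.integral_of_le hab.le]
  calc ∫ x in a..b, ψ x • (f x - c)
      = (∫ x in a..b, f x * ψ x) - c * ∫ x in a..b, ψ x := by
        rw [← intervalIntegral.integral_const_mul,
          ← intervalIntegral.integral_sub hfψ ((hψc.intervalIntegrable a b).const_mul c)]
        exact intervalIntegral.integral_congr fun x _ => by rw [smul_eq_mul]; ring
    _ = ∫ x in a..b, f x * (ψ x - (b - a)⁻¹ * ∫ y in a..b, ψ y) := by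
        simp only [mul_sub]
        rw [intervalIntegral.integral_sub hfψ (hf.mul_const _),
          intervalIntegral.integral_mul_const]
        ring
    _ = 0 := h _ (hψc.sub continuous_const) <| by
        rw [intervalIntegral.integral_sub (hψc.intervalIntegrable a b) intervalIntegrable_const,
          intervalIntegral.integral_const, smul_eq_mul, ← mul_assoc,
          mul_inv_cancel₀ (sub_pos.2 hab).ne', one_mul, sub_self]

lemma ContinuousOn.hasDerivAt_integral_of_mem_Ioo {g : ℝ → ℝ} {c x : ℝ}
    (hg : ContinuousOn g (Icc a b)) (hc : c ∈ Icc a b) (hx : x ∈ Ioo a b) :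
    HasDerivAt (fun y => ∫ z in c..y, g z) (g x) x :=
  intervalIntegral.integral_hasDerivAt_right
    ((hg.mono (uIcc_subset_Icc hc (Ioo_subset_Icc_self hx))).intervalIntegrable)
    ((hg.mono Ioo_subset_Icc_self).stronglyMeasurableAtFilter isOpen_Ioo x hx)
    (hg.continuousAt (Icc_mem_nhds hx.1 hx.2))

lemma hasDerivAt_of_ae_eq {u u' D : ℝ → ℝ} (hu : ∀ x ∈ Ioo a b, HasDerivAt u (u' x) x)
    (hint : IntervalIntegrable u' volume a b) (hD : ContinuousOn D (Icc a b))
    (hae : u' =ᵐ[volume.restrict (Ioo a b)] D) {x : ℝ} (hx : x ∈ Ioo a b) :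
    HasDerivAt u (D x) x := by
  refine ((hD.hasDerivAt_integral_of_mem_Ioo (Ioo_subset_Icc_self hx) hx).const_add (u x))
    |>.congr_of_eventuallyEq ?_
  filter_upwards [isOpen_Ioo.mem_nhds hx] with y hy
  have hsub : uIcc x y ⊆ Ioo a b := ordConnected_Ioo.uIcc_subset hx hy
  have hae' := (ae_restrict_iff' measurableSet_Ioo).1 hae
  rw [← intervalIntegral.integral_congr_ae (hae'.mono fun z hz hzxy => hz (hsub
      (uIoc_subset_uIcc hzxy))),
    intervalIntegral.integral_eq_sub_of_hasDerivAt (fun z hz => hu z (hsub hz))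
      (hint.mono_set (hsub.trans (Ioo_subset_Icc_self.trans (Icc_subset_uIcc))))]
  ring

lemma memH10_primitive {θ : ℝ → ℝ} (hθ : Continuous θ) (hθ0 : ∫ x in a..b, θ x = 0) :
    MemH10 a b (fun x => ∫ y in a..x, θ y) θ := by
  have hd : ∀ x, HasDerivAt (fun x => ∫ y in a..x, θ y) (θ x) x := fun x =>
    (hθ.integral_hasStrictDerivAt a x).hasDerivAt
  exact ⟨HasDerivAt.continuousOn fun x _ => hd x, fun x _ => hd x,
    (hθ.pow 2).intervalIntegrable a b, intervalIntegral.integral_same, hθ0⟩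

theorem exists_ae_eq_hasDerivAt_of_weakDeriv {f g : ℝ → ℝ} (hab : a < b)
    (hf : IntervalIntegrable f volume a b) (hg : ContinuousOn g (Icc a b))
    (h : ∀ φ φ', MemH10 a b φ φ' → ∫ x in a..b, (f x * φ' x + g x * φ x) = 0) :
    ∃ D, ContinuousOn D (Icc a b) ∧ (∀ x ∈ Ioo a b, HasDerivAt D (g x) x) ∧
      f =ᵐ[volume.restrict (Ioo a b)] D := by
  set G := fun x => ∫ y in a..x, g y
  have hGc : ContinuousOn G (Icc a b) := by
    simpa only [uIcc_of_le hab.le] using intervalIntegral.continuousOn_primitive_interval'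
      (hg.intervalIntegrable_of_Icc hab.le) left_mem_uIcc
  have hG' : ∀ x ∈ Ioo a b, HasDerivAt G (g x) x := fun x =>
    hg.hasDerivAt_integral_of_mem_Ioo (left_mem_Icc.2 hab.le)
  suffices horth : ∀ θ : ℝ → ℝ, Continuous θ → ∫ x in a..b, θ x = 0 →
      ∫ x in a..b, (f x - G x) * θ x = 0 by
    obtain ⟨c, hc⟩ := ae_eq_const_of_integral_mul_eq_zero hab
      (hf.sub (hGc.intervalIntegrable_of_Icc hab.le)) horth
    refine ⟨fun x => G x + c, hGc.add continuousOn_const,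
      fun x hx => (hG' x hx).add_const c, ?_⟩
    filter_upwards [hc] with x hx
    linarith
  -- The primitive of a mean-zero `θ` is an admissible test function; integrate by parts.
  intro θ hθ hθ0
  have hφ := memH10_primitive hθ hθ0
  have hparts : ∫ x in a..b, G x * θ x = -∫ x in a..b, g x * ∫ y in a..x, θ y := by
    rw [intervalIntegral.integral_mul_deriv_eq_deriv_mul_of_hasDerivAt
      (by rwa [uIcc_of_le hab.le]) (by rw [uIcc_of_le hab.le]; exact hφ.1)
      (by simpa only [min_eq_left hab.le, max_eq_right hab.le] using hG')
      (fun x hx => hφ.2.1 x (by rwa [min_eq_left hab.le, max_eq_right hab.le] at hx))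
      (hg.intervalIntegrable_of_Icc hab.le)
      (hθ.intervalIntegrable a b), hθ0, intervalIntegral.integral_same]
    ring
  have hfθ : IntervalIntegrable (fun x => f x * θ x) volume a b :=
    hf.mul_continuousOn hθ.continuousOn
  have hGθ : IntervalIntegrable (fun x => G x * θ x) volume a b :=
    (hGc.mul hθ.continuousOn).intervalIntegrable_of_Icc hab.le
  have hgφ : IntervalIntegrable (fun x => g x * ∫ y in a..x, θ y) volume a b :=
    (hg.mul hφ.1).intervalIntegrable_of_Icc hab.le
  calc ∫ x in a..b, (f x - G x) * θ x
      = (∫ x in a..b, f x * θ x) - ∫ x in a..b, G x * θ x := by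
        simp only [sub_mul]
        exact intervalIntegral.integral_sub hfθ hGθ
    _ = ∫ x in a..b, (f x * θ x + g x * ∫ y in a..x, θ y) := by
        rw [hparts, intervalIntegral.integral_add hfθ hgφ, sub_neg_eq_add]
    _ = 0 := h _ _ hφ

end WeakDerivative

structure SolvesLinearODE (a b : ℝ) (C y y' : ℝ → ℝ) : Prop where
  continuousOn : ContinuousOn y (Icc a b)
  continuousOn_deriv : ContinuousOn y' (Icc a b)
  hasDerivAt : ∀ x ∈ Ioo a b, HasDerivAt y (y' x) x
  hasDerivAt_deriv : ∀ x ∈ Ioo a b, HasDerivAt y' (C x * y x) x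

namespace SolvesLinearODE

variable {a b x x₀ : ℝ} {C y y' z z' : ℝ → ℝ}

lemma sub_const_mul (hy : SolvesLinearODE a b C y y') (hz : SolvesLinearODE a b C z z')
    (k : ℝ) : SolvesLinearODE a b C (fun x => y x - k * z x) (fun x => y' x - k * z' x) where
  continuousOn := hy.continuousOn.sub (continuousOn_const.mul hz.continuousOn)
  continuousOn_deriv :=
    hy.continuousOn_deriv.sub (continuousOn_const.mul hz.continuousOn_deriv)
  hasDerivAt x hx := (hy.hasDerivAt x hx).fun_sub ((hz.hasDerivAt x hx).const_mul k)
  hasDerivAt_deriv x hx :=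
    ((hy.hasDerivAt_deriv x hx).fun_sub ((hz.hasDerivAt_deriv x hx).const_mul k)).congr_deriv
      (by ring)

lemma wronskian_eq_zero (hy : SolvesLinearODE a b C y y') (hz : SolvesLinearODE a b C z z')
    (hya : y a = 0) (hza : z a = 0) (hx : x ∈ Ioo a b) : y x * z' x - z x * y' x = 0 := by
  have hsub : Icc a x ⊆ Icc a b := Icc_subset_Icc_right hx.2.le
  obtain ⟨c, hc, hslope⟩ := exists_hasDerivAt_eq_slope (fun x => y x * z' x - z x * y' x)
    (fun _ => 0) hx.1
    ((hy.continuousOn.mul hz.continuousOn_deriv).sub (hz.continuousOn.mul hy.continuousOn_deriv)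
      |>.mono hsub) fun c hc => by
      have hc' : c ∈ Ioo a b := ⟨hc.1, hc.2.trans hx.2⟩
      exact (((hy.hasDerivAt c hc').mul (hz.hasDerivAt_deriv c hc')).fun_sub
        ((hz.hasDerivAt c hc').mul (hy.hasDerivAt_deriv c hc'))).congr_deriv (by ring)
  simp only [hya, hza, zero_mul, sub_zero] at hslope
  rw [eq_comm, div_eq_zero_iff] at hslope
  exact hslope.resolve_right (sub_pos.2 hx.1).ne'

lemma eqOn_zero (hy : SolvesLinearODE a b C y y') (hC : ContinuousOn C (Icc a b))
    (hx₀ : x₀ ∈ Ioo a b) (hy₀ : y x₀ = 0) (hy₀' : y' x₀ = 0) : EqOn y 0 (Ioo a b) := by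
  obtain ⟨M, hM⟩ := isCompact_Icc.exists_bound_of_continuousOn hC
  have hlip : ∀ x ∈ Ioo a b, LipschitzOnWith (max 1 M.toNNReal)
      (fun p : ℝ × ℝ => (p.2, C x * p.1)) univ := fun x hx => by
    refine (LipschitzWith.prod_snd.prodMk ((lipschitzWith_smul (C x)).comp
      LipschitzWith.prod_fst)).lipschitzOnWith.weaken (max_le_max le_rfl ?_)
    rw [mul_one, ← NNReal.coe_le_coe, coe_nnnorm, Real.coe_toNNReal']
    exact (hM x (Ioo_subset_Icc_self hx)).trans (le_max_left _ _)
  have hsol := ODE_solution_unique_of_mem_Ioo hlip hx₀ (f := fun x => (y x, y' x))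
    (g := fun _ => 0)
    (fun x hx => ⟨(hy.hasDerivAt x hx).prodMk (hy.hasDerivAt_deriv x hx), mem_univ _⟩)
    (fun x _ => ⟨by simpa only [Prod.fst_zero, Prod.snd_zero, mul_zero, Prod.mk_zero_zero]
      using hasDerivAt_const x (0 : ℝ × ℝ), mem_univ _⟩)
    (by simp [hy₀, hy₀'])
  exact fun x hx => congrArg Prod.fst (hsol hx)

lemma eqOn_const_mul (hy : SolvesLinearODE a b C y y') (hz : SolvesLinearODE a b C z z')
    (hC : ContinuousOn C (Icc a b)) (hya : y a = 0) (hza : z a = 0) (hx₀ : x₀ ∈ Ioo a b)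
    (hz₀ : z x₀ ≠ 0) : EqOn y (fun x => y x₀ / z x₀ * z x) (Ioo a b) := by
  have hW := hy.wronskian_eq_zero hz hya hza hx₀
  have h0 := (hy.sub_const_mul hz (y x₀ / z x₀)).eqOn_zero hC hx₀
    (by rw [div_mul_cancel₀ _ hz₀, sub_self])
    (by field_simp; linarith)
  exact fun x hx => sub_eq_zero.1 (h0 hx)

end SolvesLinearODE

theorem IsGroundState.exists_solvesLinearODE {a t : ℝ} {V u u' : ℝ → ℝ} (hat : a < t)
    (hV : ContinuousOn V (Icc a t)) (hu : IsGroundState a t V u u') :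
    ∃ D, SolvesLinearODE a t (fun x => V x - groundStateEnergy a V t) u D := by
  obtain ⟨D, hDc, hD', hae⟩ := exists_ae_eq_hasDerivAt_of_weakDeriv hat
    (hu.1.intervalIntegrable_deriv hat.le)
    (g := fun x => (V x - groundStateEnergy a V t) * u x) ((hV.sub continuousOn_const).mul hu.1.1)
    fun φ φ' hφ => by
      simpa only [mul_assoc] using hu.integral_deriv_mul_add_eq_zero hat.le hV hφ
  exact ⟨D, hu.1.1, hDc,
    fun x hx => hasDerivAt_of_ae_eq hu.1.2.1 (hu.1.intervalIntegrable_deriv hat.le) hDc hae hx,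
    hD'⟩

lemma exists_mem_Ioo_ne_zero_of_integral_ne_zero {a b : ℝ} {f : ℝ → ℝ} (hab : a ≤ b)
    (h : ∫ x in a..b, f x ≠ 0) : ∃ x ∈ Ioo a b, f x ≠ 0 := by
  rw [intervalIntegral.integral_of_le hab, integral_Ioc_eq_integral_Ioo] at h
  exact exists_ne_zero_of_setIntegral_ne_zero h

theorem ground_state_unique_general (a b : ℝ)
    (V : ℝ → ℝ) (hV : ContinuousOn V (Set.Icc a b))
    (t : ℝ) (hat : a < t) (htb : t ≤ b)
    (u₁ u₁' u₂ u₂' : ℝ → ℝ)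
    (h₁ : MemH10 a t u₁ u₁') (h₂ : MemH10 a t u₂ u₂')
    (hn₁ : (∫ x in a..t, (u₁ x) ^ 2) = 1) (hn₂ : (∫ x in a..t, (u₂ x) ^ 2) = 1)
    (hpos₁ : ∀ x ∈ Set.Ioo a t, 0 ≤ u₁ x) (hpos₂ : ∀ x ∈ Set.Ioo a t, 0 ≤ u₂ x)
    (hmin₁ : (∫ x in a..t, ((u₁' x) ^ 2 + V x * (u₁ x) ^ 2)) = groundStateEnergy a V t)
    (hmin₂ : (∫ x in a..t, ((u₂' x) ^ 2 + V x * (u₂ x) ^ 2)) = groundStateEnergy a V t) :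
    ∀ᵐ x ∂(volume.restrict (Set.Ioo a t)), u₁ x = u₂ x := by
  have hVt : ContinuousOn V (Icc a t) := hV.mono (Icc_subset_Icc_right htb)
  obtain ⟨D₁, hD₁⟩ := IsGroundState.exists_solvesLinearODE hat hVt ⟨h₁, hn₁, hmin₁⟩
  obtain ⟨D₂, hD₂⟩ := IsGroundState.exists_solvesLinearODE hat hVt ⟨h₂, hn₂, hmin₂⟩
  obtain ⟨x₀, hx₀, hu₂x₀⟩ : ∃ x ∈ Ioo a t, u₂ x ^ 2 ≠ 0 :=
    exists_mem_Ioo_ne_zero_of_integral_ne_zero hat.le (hn₂ ▸ one_ne_zero)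
  set k := u₁ x₀ / u₂ x₀
  have hprop : ∀ x ∈ Icc a t, u₁ x = k * u₂ x := by
    intro x hx
    rcases eq_endpoints_or_mem_Ioo_of_mem_Icc hx with rfl | rfl | hx
    · simp [h₁.2.2.2.1, h₂.2.2.2.1]
    · simp [h₁.2.2.2.2, h₂.2.2.2.2]
    · exact hD₁.eqOn_const_mul hD₂ (hVt.sub continuousOn_const) h₁.2.2.2.1 h₂.2.2.2.1 hx₀
        (pow_ne_zero_iff two_ne_zero |>.1 hu₂x₀) hx
  have hk : k = 1 := by
    have hk2 : k ^ 2 = 1 := by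
      rw [← hn₁, intervalIntegral.integral_congr fun x hx => by
          rw [hprop x (uIcc_of_le hat.le ▸ hx)],
        ← mul_one (k ^ 2), ← hn₂, ← intervalIntegral.integral_const_mul]
      simp only [mul_pow]
    exact (pow_eq_one_iff_of_nonneg (div_nonneg (hpos₁ x₀ hx₀) (hpos₂ x₀ hx₀))
      two_ne_zero).1 hk2
  filter_upwards [ae_restrict_mem measurableSet_Ioo] with x hx
  rw [hprop x (Ioo_subset_Icc_self hx), hk, one_mul]

/-- uniqueness (up to a.e. equality) of the nonnegative normalized
minimizer of the ground state energy on `(a,t)`. -/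
theorem ground_state_unique (a b : ℝ) (hab : a < b)
    (V : ℝ → ℝ) (hV : ContinuousOn V (Set.Icc a b))
    (t : ℝ) (hat : a < t) (htb : t ≤ b)
    (u₁ u₁' u₂ u₂' : ℝ → ℝ)
    (h₁ : MemH10 a t u₁ u₁') (h₂ : MemH10 a t u₂ u₂')
    (hn₁ : (∫ x in a..t, (u₁ x) ^ 2) = 1) (hn₂ : (∫ x in a..t, (u₂ x) ^ 2) = 1)
    (hpos₁ : ∀ x ∈ Set.Ioo a t, 0 ≤ u₁ x) (hpos₂ : ∀ x ∈ Set.Ioo a t, 0 ≤ u₂ x)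
    (hmin₁ : (∫ x in a..t, ((u₁' x) ^ 2 + V x * (u₁ x) ^ 2)) = groundStateEnergy a V t)
    (hmin₂ : (∫ x in a..t, ((u₂' x) ^ 2 + V x * (u₂ x) ^ 2)) = groundStateEnergy a V t) :
    ∀ᵐ x ∂(volume.restrict (Set.Ioo a t)), u₁ x = u₂ x :=
  ground_state_unique_general a b V hV t hat htb u₁ u₁' u₂ u₂' h₁ h₂ hn₁ hn₂ hpos₁ hpos₂ hmin₁ hmin₂
end

section
/- Hadamard variational formula: for every t ∈ (a,b), the derivative of the eigenvalue with respect to the endpoint satisfies λ'(t) = −(∂ₓu(t,t))², where ∂ₓu(t,t) denotes the spatial derivative of u(t,·) at x = t. -/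
/-!
For `s < t`, both `u s` and `u t` solve the eigenvalue equation on `[a, s]` and vanish at `a`, so
integrating the derivative of their Wronskian gives
`(λ t - λ s) * ∫ x in a..s, u t x * u s x = u t s * ∂ₓu(s, s)` (using `u s s = 0`).
Divide by `s - t` and let `s → t⁻`: the integral tends to the normalisation `1`, while
`u t s / (s - t)` and `∂ₓu(s, s)` both tend to `∂ₓu(t, t)` (using `u t t = 0`). As `λ` is
differentiable at `t`, the left difference quotient alone determines `λ'(t)`.
-/

open MeasureTheory Set Filter Topology

theorem ContDiffOn.hasDerivAt_deriv_of_isOpen {𝕜 F : Type*} [NontriviallyNormedField 𝕜]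
    [NormedAddCommGroup F] [NormedSpace 𝕜 F] {f : 𝕜 → F} {s : Set 𝕜} {x : 𝕜}
    (hf : ContDiffOn 𝕜 2 f s) (hs : IsOpen s) (hx : x ∈ s) :
    HasDerivAt (deriv f) (deriv (deriv f) x) x :=
  (((hf.deriv_of_isOpen hs (by norm_num : (1 : WithTop ℕ∞) + 1 ≤ 2)).differentiableOn
    one_ne_zero).differentiableAt (hs.mem_nhds hx)).hasDerivAt

noncomputable def wronskian (f g : ℝ → ℝ) (x : ℝ) : ℝ := f x * deriv g x - g x * deriv f x

section Schrodinger

variable {V f g : ℝ → ℝ} {μ ν a m : ℝ}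

theorem hasDerivAt_wronskian_of_eigen {x : ℝ} (hf : Differentiable ℝ f)
    (hg : Differentiable ℝ g) (hf2 : HasDerivAt (deriv f) (deriv (deriv f) x) x)
    (hg2 : HasDerivAt (deriv g) (deriv (deriv g) x) x)
    (hfeq : -deriv (deriv f) x + V x * f x = μ * f x)
    (hgeq : -deriv (deriv g) x + V x * g x = ν * g x) :
    HasDerivAt (wronskian f g) ((μ - ν) * (f x * g x)) x := by
  refine (((hf x).hasDerivAt.mul hg2).sub ((hg x).hasDerivAt.mul hf2)).congr_deriv ?_
  linear_combination g x * hfeq - f x * hgeq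

theorem sub_mul_integral_mul_eq_wronskian (ham : a ≤ m)
    (hf : ContDiff ℝ 1 f) (hg : ContDiff ℝ 1 g)
    (hf2 : ContDiffOn ℝ 2 f (Ioo a m)) (hg2 : ContDiffOn ℝ 2 g (Ioo a m))
    (hfeq : ∀ x ∈ Ioo a m, -deriv (deriv f) x + V x * f x = μ * f x)
    (hgeq : ∀ x ∈ Ioo a m, -deriv (deriv g) x + V x * g x = ν * g x)
    (hfa : f a = 0) (hga : g a = 0) :
    (μ - ν) * ∫ x in a..m, f x * g x = wronskian f g m := by
  have hw : Continuous (wronskian f g) :=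
    (hf.continuous.mul (hg.continuous_deriv le_rfl)).sub
      (hg.continuous.mul (hf.continuous_deriv le_rfl))
  have hw' : ∀ x ∈ Ioo a m, HasDerivAt (wronskian f g) ((μ - ν) * (f x * g x)) x :=
    fun x hx => hasDerivAt_wronskian_of_eigen (hf.differentiable one_ne_zero)
      (hg.differentiable one_ne_zero) (hf2.hasDerivAt_deriv_of_isOpen isOpen_Ioo hx)
      (hg2.hasDerivAt_deriv_of_isOpen isOpen_Ioo hx) (hfeq x hx) (hgeq x hx)
  rw [← intervalIntegral.integral_const_mul,
    intervalIntegral.integral_eq_sub_of_hasDeriv_right_of_le ham hw.continuousOn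
      (fun x hx => (hw' x hx).hasDerivWithinAt)
      ((continuous_const.mul (hf.continuous.mul hg.continuous)).intervalIntegrable _ _)]
  simp [wronskian, hfa, hga]

end Schrodinger

theorem eigenvalue_sub_mul_integral_eq {V lam : ℝ → ℝ} {a b : ℝ} {u : ℝ → ℝ → ℝ}
    (hu : ∀ t, ContDiff ℝ 1 (u t))
    (htwice : ∀ t ∈ Ioo a b, ContDiffOn ℝ 2 (u t) (Icc a t))
    (heq : ∀ t ∈ Ioo a b, ∀ x ∈ Ioo a t,
      -(deriv (deriv (u t)) x) + V x * u t x = lam t * u t x)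
    (hbca : ∀ t ∈ Ioo a b, u t a = 0) (hbct : ∀ t ∈ Ioo a b, u t t = 0)
    {s t : ℝ} (ht : t ∈ Ioo a b) (hs : s ∈ Ioo a t) :
    (lam t - lam s) * ∫ x in a..s, u t x * u s x = u t s * deriv (u s) s := by
  have hsb : s ∈ Ioo a b := ⟨hs.1, hs.2.trans ht.2⟩
  rw [sub_mul_integral_mul_eq_wronskian hs.1.le (hu t) (hu s)
    ((htwice t ht).mono (Ioo_subset_Icc_self.trans (Icc_subset_Icc_right hs.2.le)))
    ((htwice s hsb).mono Ioo_subset_Icc_self)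
    (fun x hx => heq t ht x ⟨hx.1, hx.2.trans hs.2⟩) (heq s hsb) (hbca t ht) (hbca s hsb),
    wronskian, hbct s hsb, zero_mul, sub_zero]

theorem hadamard_variational_formula_general
    (V : ℝ → ℝ)
    (a b : ℝ)
    (lam : ℝ → ℝ) (hlam : ∀ t ∈ Set.Ioo a b, DifferentiableAt ℝ lam t)
    (u : ℝ → ℝ → ℝ)
    (hC1 : ContDiff ℝ 1 (Function.uncurry u))
    (htwice : ∀ t ∈ Set.Ioo a b, ContDiffOn ℝ 2 (u t) (Set.Icc a t))
    (heq : ∀ t ∈ Set.Ioo a b, ∀ x ∈ Set.Ioo a t,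
      -(deriv (deriv (u t)) x) + V x * u t x = lam t * u t x)
    (hbca : ∀ t ∈ Set.Ioo a b, u t a = 0)
    (hbct : ∀ t ∈ Set.Ioo a b, u t t = 0)
    (hnorm : ∀ t ∈ Set.Ioo a b, (∫ x in a..t, (u t x) ^ 2) = 1)
    :
    ∀ t ∈ Set.Ioo a b, deriv lam t = -(deriv (u t) t) ^ 2 := by
  intro t ht
  have hu : ∀ r, ContDiff ℝ 1 (u r) := fun r => hC1.comp (contDiff_const.prodMk contDiff_id)
  have hlam' := (hasDerivAt_iff_tendsto_slope_left_right.mp (hlam t ht).hasDerivAt).1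
  have hslope := (hasDerivAt_iff_tendsto_slope_left_right.mp
    ((hu t).differentiable one_ne_zero t).hasDerivAt).1
  have hdiag : Tendsto (fun s => deriv (u s) s) (𝓝[<] t) (𝓝 (deriv (u t) t)) :=
    ((Continuous.fderiv_one hC1 continuous_id).clm_apply continuous_const).continuousAt
      |>.mono_left nhdsWithin_le_nhds
  have hI : Tendsto (fun s => ∫ x in a..s, u t x * u s x) (𝓝[<] t) (𝓝 1) := by
    have hcont : Continuous fun s => ∫ x in a..s, u t x * u s x :=
      intervalIntegral.continuous_parametric_intervalIntegral_of_continuous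
        (((hu t).continuous.comp continuous_snd).mul hC1.continuous) continuous_id
    simpa [← sq, hnorm t ht] using hcont.continuousAt.mono_left (nhdsWithin_le_nhds (a := t))
  have hkey : ∀ᶠ s in 𝓝[<] t, slope lam t s * ∫ x in a..s, u t x * u s x =
      -(slope (u t) t s * deriv (u s) s) := by
    filter_upwards [Ioo_mem_nhdsLT ht.1] with s hs
    rw [slope_def_field, slope_def_field, hbct t ht, sub_zero, div_mul_eq_mul_div,
      div_mul_eq_mul_div, ← neg_div]
    congr 1
    linear_combination -eigenvalue_sub_mul_integral_eq hu htwice heq hbca hbct ht hs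
  simpa [sq] using tendsto_nhds_unique ((hlam'.mul hI).congr' hkey) (hslope.mul hdiag).neg

/-- Hadamard variational formula `λ'(t) = -(∂ₓu(t,t))²` for the
Dirichlet eigenvalue as a function of the right endpoint. Here `u t x` denotes
`u(t,x)`, `deriv (u t) x` is `∂ₓu(t,x)` and `deriv (fun s => u s x) t` is `∂ₜu(t,x)`. -/
theorem hadamard_variational_formula
    (V : ℝ → ℝ) (hV : Continuous V)
    (a b : ℝ) (hab : a < b)
    (lam : ℝ → ℝ) (hlam : ∀ t ∈ Set.Ioo a b, DifferentiableAt ℝ lam t)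
    (u : ℝ → ℝ → ℝ)
    (hC1 : ContDiff ℝ 1 (Function.uncurry u))
    (huxx : Continuous (fun p : ℝ × ℝ => deriv (deriv (u p.1)) p.2))
    (hutx : Continuous (fun p : ℝ × ℝ => deriv (fun s => deriv (u s) p.2) p.1))
    (htwice : ∀ t ∈ Set.Ioo a b, ContDiffOn ℝ 2 (u t) (Set.Icc a t))
    (heq : ∀ t ∈ Set.Ioo a b, ∀ x ∈ Set.Ioo a t,
      -(deriv (deriv (u t)) x) + V x * u t x = lam t * u t x)
    (hbca : ∀ t ∈ Set.Ioo a b, u t a = 0)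
    (hbct : ∀ t ∈ Set.Ioo a b, u t t = 0)
    (hnorm : ∀ t ∈ Set.Ioo a b, (∫ x in a..t, (u t x) ^ 2) = 1)
    :
    ∀ t ∈ Set.Ioo a b, deriv lam t = -(deriv (u t) t) ^ 2 :=
  hadamard_variational_formula_general V a b lam hlam u hC1 htwice heq hbca hbct hnorm
end

section
/- Unique sign change of the endpoint variation: fix t ∈ (a,b) and write u̇(x) := ∂ₜu(t,x). Assume in addition that u(t,x) > 0 for all x ∈ (a,t), that λ'(t) < 0, that ∫_a^t u(t,x) u̇(x) dx = 0, and that u̇(x)/u(t,x) → ∞ as x → t from the left. Then there exists a unique t₀ ∈ (a,t) such that u̇(x) < 0 for all x ∈ (a,t₀) and u̇(x) > 0 for all x ∈ (t₀,t). -/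
/-!
The Wronskian of `u(t,·)` and `u(s,·)` vanishes at `a` and has derivative
`(λ(t) - λ(s)) u(t,·) u(s,·)`, so the ratio `u(s,·)/u(t,·)` has the explicit derivative
`(λ(t) - λ(s)) (∫_a^y u(t,·) u(s,·)) / u(t,y)²`. Subtracting `1`, dividing by `s - t` and
letting `s → t` gives
`u̇/u(t,·) |_{x₁}^{x₂} = -λ'(t) ∫_{x₁}^{x₂} (∫_a^y u(t,·)²) / u(t,y)² dy > 0`,
so `u̇/u(t,·)` is strictly increasing on `(a,t)`. Orthogonality to `u(t,·)` forces `u̇ ≤ 0`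
somewhere and the blow-up of the ratio at `t` forces `u̇ > 0` somewhere; strict monotonicity
of the ratio turns this into a unique sign change.
-/

open MeasureTheory Set Filter Topology

theorem intervalIntegral.continuous_parametric_intervalIntegral_of_continuousOn
    {X E : Type*} [TopologicalSpace X] [NormedAddCommGroup E] [NormedSpace ℝ E]
    {f : X → ℝ → E} {a₀ b₀ : ℝ} (hab : a₀ ≤ b₀)
    (hf : ContinuousOn (Function.uncurry f) (univ ×ˢ Icc a₀ b₀)) :
    Continuous fun x => ∫ y in a₀..b₀, f x y := by
  have hproj : Continuous (Function.uncurry fun x y => f x (projIcc a₀ b₀ hab y)) :=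
    hf.comp_continuous (continuous_fst.prodMk (continuous_subtype_val.comp
      ((continuous_projIcc (h := hab)).comp continuous_snd))) fun p => ⟨trivial, Subtype.mem _⟩
  refine (continuous_parametric_intervalIntegral_of_continuous' (μ := volume) hproj a₀ b₀).congr
    fun x => intervalIntegral.integral_congr fun y hy => ?_
  rw [uIcc_of_le hab] at hy
  simp [projIcc_of_mem hab hy]

theorem ContDiff.uncurry_apply {u : ℝ → ℝ → ℝ} {n : WithTop ℕ∞}
    (hu : ContDiff ℝ n (Function.uncurry u)) (s : ℝ) : ContDiff ℝ n (u s) :=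
  hu.comp (contDiff_prodMk_right s)

theorem hasDerivAt_uncurry_left {u : ℝ → ℝ → ℝ} (hu : Differentiable ℝ (Function.uncurry u))
    (s x : ℝ) : HasDerivAt (fun s => u s x) (fderiv ℝ (Function.uncurry u) (s, x) (1, 0)) s :=
  (hu (s, x)).hasFDerivAt.comp_hasDerivAt (f := fun s => (s, x)) s
    ((hasDerivAt_id s).prodMk (hasDerivAt_const s x))

theorem continuous_deriv_uncurry_left {u : ℝ → ℝ → ℝ} (hu : ContDiff ℝ 1 (Function.uncurry u))
    (s : ℝ) : Continuous fun x => deriv (fun s => u s x) s := by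
  simp_rw [(hasDerivAt_uncurry_left (hu.differentiable one_ne_zero) s _).deriv]
  exact ((hu.continuous_fderiv one_ne_zero).comp (continuous_const.prodMk continuous_id)).clm_apply
    continuous_const

theorem ContDiffOn.hasDerivAt_deriv_of_schrodinger_eq {V f : ℝ → ℝ} {μ a c y : ℝ}
    (hf : ContDiffOn ℝ 2 f (Icc a c))
    (heq : ∀ x ∈ Ioo a c, -deriv (deriv f) x + V x * f x = μ * f x) (hy : y ∈ Ioo a c) :
    HasDerivAt (deriv f) ((V y - μ) * f y) y := by
  have h1 : ContDiffOn ℝ 1 (deriv f) (Ioo a c) :=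
    (hf.mono Ioo_subset_Icc_self).deriv_of_isOpen isOpen_Ioo (by norm_num)
  exact (((h1.differentiableOn one_ne_zero) y hy).differentiableAt
    (isOpen_Ioo.mem_nhds hy)).hasDerivAt.congr_deriv (by linear_combination -heq y hy)

theorem wronskian_eq_integral {V f g : ℝ → ℝ} {μ ν a x : ℝ} (hax : a ≤ x)
    (hf : ContDiff ℝ 1 f) (hg : ContDiff ℝ 1 g)
    (hf'' : ∀ y ∈ Ioo a x, HasDerivAt (deriv f) ((V y - μ) * f y) y)
    (hg'' : ∀ y ∈ Ioo a x, HasDerivAt (deriv g) ((V y - ν) * g y) y)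
    (hfa : f a = 0) (hga : g a = 0) :
    f x * deriv g x - deriv f x * g x = (μ - ν) * ∫ y in a..x, f y * g y := by
  have hW : ∀ y ∈ Ioo a x, HasDerivAt (fun z => f z * deriv g z - deriv f z * g z)
      ((μ - ν) * (f y * g y)) y := fun y hy =>
    (((hf.differentiable one_ne_zero y).hasDerivAt.mul (hg'' y hy)).sub
      ((hf'' y hy).mul (hg.differentiable one_ne_zero y).hasDerivAt)).congr_deriv (by ring)
  have hcont : Continuous fun z => f z * deriv g z - deriv f z * g z := by
    have := hf.continuous; have := hg.continuous
    have := hf.continuous_deriv_one; have := hg.continuous_deriv_one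
    fun_prop
  have hint : IntervalIntegrable (fun y => (μ - ν) * (f y * g y)) volume a x :=
    (continuous_const.mul (hf.continuous.mul hg.continuous)).intervalIntegrable _ _
  rw [← intervalIntegral.integral_const_mul,
    intervalIntegral.integral_eq_sub_of_hasDerivAt_of_le hax hcont.continuousOn hW hint]
  simp [hfa, hga]

theorem continuousOn_integral_mul_div_sq {f g : ℝ → ℝ} {a : ℝ} {s : Set ℝ}
    (hf : Continuous f) (hg : Continuous g) (hf0 : ∀ y ∈ s, f y ≠ 0) :
    ContinuousOn (fun y => (∫ z in a..y, f z * g z) / f y ^ 2) s :=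
  (intervalIntegral.continuous_primitive (fun _ _ => (hf.mul hg).intervalIntegrable _ _)
    a).continuousOn.div (hf.pow 2).continuousOn fun y hy => pow_ne_zero 2 (hf0 y hy)

theorem div_sub_div_eq_integral_of_schrodinger {V f g : ℝ → ℝ} {μ ν a x₁ x₂ : ℝ}
    (hax₁ : a ≤ x₁) (hx₁₂ : x₁ ≤ x₂) (hf : ContDiff ℝ 1 f) (hg : ContDiff ℝ 1 g)
    (hf'' : ∀ y ∈ Ioo a x₂, HasDerivAt (deriv f) ((V y - μ) * f y) y)
    (hg'' : ∀ y ∈ Ioo a x₂, HasDerivAt (deriv g) ((V y - ν) * g y) y)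
    (hfa : f a = 0) (hga : g a = 0) (hf0 : ∀ y ∈ Icc x₁ x₂, f y ≠ 0) :
    g x₂ / f x₂ - g x₁ / f x₁
      = (μ - ν) * ∫ y in x₁..x₂, (∫ z in a..y, f z * g z) / f y ^ 2 := by
  rw [← uIcc_of_le hx₁₂] at hf0
  have hderiv : ∀ y ∈ uIcc x₁ x₂, HasDerivAt (fun y => g y / f y)
      ((μ - ν) * ((∫ z in a..y, f z * g z) / f y ^ 2)) y := by
    intro y hy
    have hy' : y ∈ Icc x₁ x₂ := uIcc_of_le hx₁₂ ▸ hy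
    have hW := wronskian_eq_integral (hax₁.trans hy'.1) hf hg
      (fun z hz => hf'' z ⟨hz.1, hz.2.trans_le hy'.2⟩)
      (fun z hz => hg'' z ⟨hz.1, hz.2.trans_le hy'.2⟩) hfa hga
    refine ((hg.differentiable one_ne_zero y).hasDerivAt.div
      (hf.differentiable one_ne_zero y).hasDerivAt (hf0 y hy)).congr_deriv ?_
    rw [mul_div_assoc', ← hW]
    ring
  rw [← intervalIntegral.integral_const_mul, intervalIntegral.integral_eq_sub_of_hasDerivAt hderiv
    (continuousOn_const.mul (continuousOn_integral_mul_div_sq hf.continuous hg.continuous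
      hf0)).intervalIntegrable]

theorem endpoint_variation_div_sub_div_eq {V lam : ℝ → ℝ} {u : ℝ → ℝ → ℝ} {a b t x₁ x₂ : ℝ}
    (hu : ContDiff ℝ 1 (Function.uncurry u))
    (htwice : ∀ s ∈ Ioo a b, ContDiffOn ℝ 2 (u s) (Icc a s))
    (heq : ∀ s ∈ Ioo a b, ∀ x ∈ Ioo a s,
      -(deriv (deriv (u s)) x) + V x * u s x = lam s * u s x)
    (hbca : ∀ s ∈ Ioo a b, u s a = 0) (ht : t ∈ Ioo a b) (hlam : DifferentiableAt ℝ lam t)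
    (hpos : ∀ x ∈ Ioo a t, 0 < u t x) (hax₁ : a < x₁) (hx₁₂ : x₁ ≤ x₂) (hx₂t : x₂ < t) :
    deriv (fun s => u s x₂) t / u t x₂ - deriv (fun s => u s x₁) t / u t x₁
      = -deriv lam t * ∫ y in x₁..x₂, (∫ z in a..y, u t z * u t z) / u t y ^ 2 := by
  have hode : ∀ s ∈ Ioo a b, ∀ y ∈ Ioo a x₂, x₂ < s →
      HasDerivAt (deriv (u s)) ((V y - lam s) * u s y) y := fun s hs y hy hs₂ =>
    (htwice s hs).hasDerivAt_deriv_of_schrodinger_eq (heq s hs) ⟨hy.1, hy.2.trans hs₂⟩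
  have hu0 : ∀ y ∈ Icc x₁ x₂, u t y ≠ 0 := fun y hy =>
    (hpos y ⟨hax₁.trans_le hy.1, hy.2.trans_lt hx₂t⟩).ne'
  set J := fun s => ∫ y in x₁..x₂, (∫ z in a..y, u t z * u s z) / u t y ^ 2
  have hJ : ContinuousAt J t := by
    refine (intervalIntegral.continuous_parametric_intervalIntegral_of_continuousOn hx₁₂
      ?_).continuousAt
    have hI : Continuous fun p : ℝ × ℝ => ∫ z in a..p.2, u t z * u p.1 z :=
      intervalIntegral.continuous_parametric_intervalIntegral_of_continuous (μ := volume)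
        (((hu.uncurry_apply t).continuous.comp continuous_snd).mul (hu.continuous.comp
          ((continuous_fst.comp continuous_fst).prodMk continuous_snd))) continuous_snd
    exact hI.continuousOn.div
      (((hu.uncurry_apply t).continuous.comp continuous_snd).pow 2).continuousOn
      fun p hp => pow_ne_zero 2 (hu0 p.2 hp.2)
  have hid : ∀ᶠ s in 𝓝[≠] t,
      slope (fun s => u s x₂) t s / u t x₂ - slope (fun s => u s x₁) t s / u t x₁
        = -slope lam t s * J s := by
    filter_upwards [nhdsWithin_le_nhds (Ioo_mem_nhds hx₂t ht.2)] with s hs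
    have hsab : s ∈ Ioo a b := ⟨(hax₁.trans_le hx₁₂).trans hs.1, hs.2⟩
    have hratio := div_sub_div_eq_integral_of_schrodinger hax₁.le hx₁₂ (hu.uncurry_apply t)
      (hu.uncurry_apply s) (fun y hy => hode t ht y hy hx₂t) (fun y hy => hode s hsab y hy hs.1)
      (hbca t ht) (hbca s hsab) hu0
    have h₁ := hu0 x₁ ⟨le_rfl, hx₁₂⟩
    have h₂ := hu0 x₂ ⟨hx₁₂, le_rfl⟩
    simp only [slope_def_field, J]
    calc (u s x₂ - u t x₂) / (s - t) / u t x₂ - (u s x₁ - u t x₁) / (s - t) / u t x₁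
        = (u s x₂ / u t x₂ - u s x₁ / u t x₁) / (s - t) := by field_simp; ring
      _ = _ := by rw [hratio]; ring
  have hcol : ∀ x, HasDerivAt (fun s => u s x) (deriv (fun s => u s x) t) t := fun x =>
    (hasDerivAt_uncurry_left (hu.differentiable one_ne_zero) t x).differentiableAt.hasDerivAt
  refine tendsto_nhds_unique
    ((((hasDerivAt_iff_tendsto_slope.mp (hcol x₂)).div_const _).sub
      ((hasDerivAt_iff_tendsto_slope.mp (hcol x₁)).div_const _)).congr' hid) ?_
  exact (hasDerivAt_iff_tendsto_slope.mp hlam.hasDerivAt).neg.mul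
    (hJ.tendsto.mono_left nhdsWithin_le_nhds)

theorem strictMonoOn_endpoint_variation_div {V lam : ℝ → ℝ} {u : ℝ → ℝ → ℝ} {a b t : ℝ}
    (hu : ContDiff ℝ 1 (Function.uncurry u))
    (htwice : ∀ s ∈ Ioo a b, ContDiffOn ℝ 2 (u s) (Icc a s))
    (heq : ∀ s ∈ Ioo a b, ∀ x ∈ Ioo a s,
      -(deriv (deriv (u s)) x) + V x * u s x = lam s * u s x)
    (hbca : ∀ s ∈ Ioo a b, u s a = 0) (ht : t ∈ Ioo a b) (hlam : DifferentiableAt ℝ lam t)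
    (hlam' : deriv lam t < 0) (hpos : ∀ x ∈ Ioo a t, 0 < u t x) :
    StrictMonoOn (fun x => deriv (fun s => u s x) t / u t x) (Ioo a t) := by
  intro x₁ hx₁ x₂ hx₂ hx₁₂
  rw [← sub_pos, endpoint_variation_div_sub_div_eq hu htwice heq hbca ht hlam hpos hx₁.1
    hx₁₂.le hx₂.2]
  have hut := (hu.uncurry_apply t).continuous
  have hsub : uIcc x₁ x₂ ⊆ Ioo a t := by
    rw [uIcc_of_le hx₁₂.le]
    exact Icc_subset_Ioo hx₁.1 hx₂.2
  have hIpos : ∀ y ∈ Ioo a t, 0 < ∫ z in a..y, u t z * u t z := fun y hy =>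
    intervalIntegral.intervalIntegral_pos_of_pos_on ((hut.mul hut).intervalIntegrable _ _)
      (fun z hz => mul_self_pos.mpr (hpos z ⟨hz.1, hz.2.trans hy.2⟩).ne') hy.1
  refine mul_pos (neg_pos.mpr hlam') (intervalIntegral.intervalIntegral_pos_of_pos_on
    (continuousOn_integral_mul_div_sq hut hut fun y hy => (hpos y (hsub hy)).ne').intervalIntegrable
    (fun y hy => ?_) hx₁₂)
  have hy' : y ∈ Ioo a t := ⟨hx₁.1.trans hy.1, hy.2.trans hx₂.2⟩
  exact div_pos (hIpos y hy') (pow_pos (hpos y hy') 2)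

theorem exists_nonpos_of_integral_mul_eq_zero {ρ v : ℝ → ℝ} {a t : ℝ} (hat : a < t)
    (hρ : Continuous ρ) (hv : Continuous v) (hρpos : ∀ x ∈ Ioo a t, 0 < ρ x)
    (horth : ∫ x in a..t, ρ x * v x = 0) : ∃ x ∈ Ioo a t, v x ≤ 0 := by
  by_contra! hvpos
  have := intervalIntegral.intervalIntegral_pos_of_pos_on ((hρ.mul hv).intervalIntegrable a t)
    (fun x hx => mul_pos (hρpos x hx) (hvpos x hx)) hat
  exact this.ne' horth

theorem le_of_sign_change {v : ℝ → ℝ} {a t r₀ r₁ : ℝ} (hr₀ : r₀ < t)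
    (hneg : ∀ x ∈ Ioo a r₀, v x < 0) (hr₁ : a < r₁) (hpos : ∀ x ∈ Ioo r₁ t, 0 < v x) :
    r₀ ≤ r₁ := by
  by_contra! h
  have hm : (r₁ + r₀) / 2 ∈ Ioo r₁ r₀ := ⟨by linarith, by linarith⟩
  exact (hneg _ ⟨hr₁.trans hm.1, hm.2⟩).not_gt (hpos _ ⟨hm.1, hm.2.trans hr₀⟩)

theorem existsUnique_sign_change_of_strictMonoOn_div {v ρ : ℝ → ℝ} {a t : ℝ}
    (hρ : ∀ x ∈ Ioo a t, 0 < ρ x) (hmono : StrictMonoOn (fun x => v x / ρ x) (Ioo a t))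
    (hnonpos : ∃ x ∈ Ioo a t, v x ≤ 0) (hpos : ∃ x ∈ Ioo a t, 0 < v x) :
    ∃! t₀, t₀ ∈ Ioo a t ∧ (∀ x ∈ Ioo a t₀, v x < 0) ∧ ∀ x ∈ Ioo t₀ t, 0 < v x := by
  have hneg_left : ∀ x ∈ Ioo a t, ∀ y ∈ Ioo a t, x < y → v y ≤ 0 → v x < 0 :=
    fun x hx y hy hxy hvy => neg_of_div_neg_left ((hmono hx hy hxy).trans_le
      (div_nonpos_of_nonpos_of_nonneg hvy (hρ y hy).le)) (hρ x hx).le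
  obtain ⟨x₁, hx₁, hv₁⟩ := hnonpos
  obtain ⟨x₂, hx₂, hv₂⟩ := hpos
  set S := {x ∈ Ioo a t | v x ≤ 0}
  have hS : S.Nonempty := ⟨x₁, hx₁, hv₁⟩
  have hSx₂ : ∀ y ∈ S, y ≤ x₂ := fun y ⟨hy, hvy⟩ => le_of_not_gt fun hxy =>
    (hneg_left x₂ hx₂ y hy hxy hvy).not_gt hv₂
  have hbdd : BddAbove S := ⟨x₂, hSx₂⟩
  have ht₀ : sSup S ∈ Ioo a t :=
    ⟨hx₁.1.trans_le (le_csSup hbdd ⟨hx₁, hv₁⟩), (csSup_le hS hSx₂).trans_lt hx₂.2⟩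
  have hneg₀ : ∀ x ∈ Ioo a (sSup S), v x < 0 := fun x hx => by
    obtain ⟨y, ⟨hy, hvy⟩, hxy⟩ := exists_lt_of_lt_csSup hS hx.2
    exact hneg_left x ⟨hx.1, hx.2.trans ht₀.2⟩ y hy hxy hvy
  have hpos₀ : ∀ x ∈ Ioo (sSup S) t, 0 < v x := fun x hx => lt_of_not_ge fun hvx =>
    (le_csSup hbdd ⟨⟨ht₀.1.trans hx.1, hx.2⟩, hvx⟩).not_gt hx.1
  exact ⟨sSup S, ⟨ht₀, hneg₀, hpos₀⟩, fun r ⟨hr, hneg, hpos⟩ =>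
    le_antisymm (le_of_sign_change hr.2 hneg ht₀.1 hpos₀)
      (le_of_sign_change ht₀.2 hneg₀ hr.1 hpos)⟩

theorem endpoint_variation_unique_sign_change_general
    (V : ℝ → ℝ)
    (a b : ℝ)
    (lam : ℝ → ℝ) (hlam : ∀ t ∈ Set.Ioo a b, DifferentiableAt ℝ lam t)
    (u : ℝ → ℝ → ℝ)
    (hC1 : ContDiff ℝ 1 (Function.uncurry u))
    (htwice : ∀ t ∈ Set.Ioo a b, ContDiffOn ℝ 2 (u t) (Set.Icc a t))
    (heq : ∀ t ∈ Set.Ioo a b, ∀ x ∈ Set.Ioo a t,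
      -(deriv (deriv (u t)) x) + V x * u t x = lam t * u t x)
    (hbca : ∀ t ∈ Set.Ioo a b, u t a = 0)
    (t : ℝ) (ht : t ∈ Set.Ioo a b)
    (hpos : ∀ x ∈ Set.Ioo a t, 0 < u t x)
    (hlam' : deriv lam t < 0)
    (horth : (∫ x in a..t, u t x * deriv (fun s => u s x) t) = 0)
    (hratio : Filter.Tendsto (fun x => deriv (fun s => u s x) t / u t x)
      (nhdsWithin t (Set.Iio t)) Filter.atTop) :
    ∃! t₀ : ℝ, t₀ ∈ Set.Ioo a t ∧
      (∀ x ∈ Set.Ioo a t₀, deriv (fun s => u s x) t < 0) ∧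
      (∀ x ∈ Set.Ioo t₀ t, 0 < deriv (fun s => u s x) t) := by
  refine existsUnique_sign_change_of_strictMonoOn_div hpos
    (strictMonoOn_endpoint_variation_div hC1 htwice heq hbca ht (hlam t ht) hlam' hpos)
    (exists_nonpos_of_integral_mul_eq_zero ht.1 (hC1.uncurry_apply t).continuous
      (continuous_deriv_uncurry_left hC1 t) hpos horth) ?_
  obtain ⟨x, hx, hxt⟩ := ((hratio.eventually_gt_atTop 0).and (Ioo_mem_nhdsLT ht.1)).exists
  exact ⟨x, hxt, (div_pos_iff_of_pos_right (hpos x hxt)).mp hx⟩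

/-- unique sign change of the endpoint variation `u̇ = ∂ₜu(t,·)`:
it is negative on `(a,t₀)` and positive on `(t₀,t)` for a unique `t₀ ∈ (a,t)`. -/
theorem endpoint_variation_unique_sign_change
    (V : ℝ → ℝ) (hV : ContDiff ℝ 1 V)
    (a b : ℝ) (hab : a < b)
    (lam : ℝ → ℝ) (hlam : ∀ t ∈ Set.Ioo a b, DifferentiableAt ℝ lam t)
    (u : ℝ → ℝ → ℝ)
    (hC1 : ContDiff ℝ 1 (Function.uncurry u))
    (huxx : Continuous (fun p : ℝ × ℝ => deriv (deriv (u p.1)) p.2))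
    (hutx : Continuous (fun p : ℝ × ℝ => deriv (fun s => deriv (u s) p.2) p.1))
    (htwice : ∀ t ∈ Set.Ioo a b, ContDiffOn ℝ 2 (u t) (Set.Icc a t))
    (heq : ∀ t ∈ Set.Ioo a b, ∀ x ∈ Set.Ioo a t,
      -(deriv (deriv (u t)) x) + V x * u t x = lam t * u t x)
    (hbca : ∀ t ∈ Set.Ioo a b, u t a = 0)
    (hbct : ∀ t ∈ Set.Ioo a b, u t t = 0)
    (hnorm : ∀ t ∈ Set.Ioo a b, (∫ x in a..t, (u t x) ^ 2) = 1)
    (t : ℝ) (ht : t ∈ Set.Ioo a b)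
    (hpos : ∀ x ∈ Set.Ioo a t, 0 < u t x)
    (hlam' : deriv lam t < 0)
    (horth : (∫ x in a..t, u t x * deriv (fun s => u s x) t) = 0)
    (hratio : Filter.Tendsto (fun x => deriv (fun s => u s x) t / u t x)
      (nhdsWithin t (Set.Iio t)) Filter.atTop) :
    ∃! t₀ : ℝ, t₀ ∈ Set.Ioo a t ∧
      (∀ x ∈ Set.Ioo a t₀, deriv (fun s => u s x) t < 0) ∧
      (∀ x ∈ Set.Ioo t₀ t, 0 < deriv (fun s => u s x) t) :=
  endpoint_variation_unique_sign_change_general V a b lam hlam u hC1 htwice heq hbca t ht hpos hlam'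
    horth hratio
end
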